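/- Let u(t,x) = f(t)·g(x) where g : ℝ → ℝ is smooth with compact support and g ≡ 1 on [−2,2], and f : ℝ → ℝ is C¹. For a Lorentz boost L(t,x) = (cosh(θ)t + sinh(θ)x, sinh(θ)t + cosh(θ)x) with θ ≠ 0, if the transformed function ũ = u ∘ L satisfies that x ↦ ũ(t,x) is C² on [−1,1] for all t near 0, then f is C² at some point. -/
import Mathlib


/-- If `u(t,x) = f(t)g(x)` with `g` smooth, compactly supported and `≡ 1` on `[-2,2]`,
`f` is `C¹`, and for a nontrivial Lorentz boost (θ ≠ 0) the boosted function
`ũ(t,x) = u(cosh(θ)t + sinh(θ)x, sinh(θ)t + cosh(θ)x)` is `C²` in `x` on `[-1,1]`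
for all `t` near `0`, then `f` is `C²` at some point. -/
theorem boosted_regularity_forces_C2
    (f g : ℝ → ℝ) (θ : ℝ) (hθ : θ ≠ 0)
    (hg : ContDiff ℝ (⊤ : ℕ∞) g) (hgc : HasCompactSupport g)
    (hg1 : ∀ x ∈ Set.Icc (-2 : ℝ) 2, g x = 1)
    (hf : ContDiff ℝ 1 f)
    (hreg : ∃ ε > 0, ∀ t : ℝ, |t| < ε →
      ContDiffOn ℝ 2
        (fun x => f (Real.cosh θ * t + Real.sinh θ * x) *
                  g (Real.sinh θ * t + Real.cosh θ * x))
        (Set.Icc (-1 : ℝ) 1)) :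
    ∃ x : ℝ, ContDiffAt ℝ 2 f x := by
  obtain ⟨ε, hε, hreg⟩ := hreg
  have h0 := hreg 0 (by simpa using hε)
  simp only [mul_zero, zero_add] at h0
  have hcosh : (0:ℝ) < Real.cosh θ := Real.cosh_pos θ
  have h0' : ContDiffAt ℝ 2 (fun x => f (Real.sinh θ * x) * g (Real.cosh θ * x)) 0 := by
    have hmem : Set.Icc (-1:ℝ) 1 ∈ nhds (0:ℝ) := by
      apply Icc_mem_nhds <;> norm_num
    exact (h0 0 (by norm_num)).contDiffAt hmem
  have hev : ∀ᶠ x in nhds (0:ℝ), g (Real.cosh θ * x) = 1 := by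
    have hx : ∀ᶠ x in nhds (0:ℝ),
        x ∈ Set.Ioo (-(2 / Real.cosh θ)) (2 / Real.cosh θ) := by
      have h2c : 0 < 2 / Real.cosh θ := by positivity
      exact Ioo_mem_nhds (by linarith) h2c
    filter_upwards [hx] with x hx
    apply hg1
    constructor
    · have h' : (-2) / Real.cosh θ < x := by rw [neg_div]; exact hx.1
      have := (div_lt_iff₀ hcosh).mp h'
      nlinarith
    · have := (lt_div_iff₀ hcosh).mp hx.2
      nlinarith
  have h1 : ContDiffAt ℝ 2 (fun x => f (Real.sinh θ * x)) 0 := by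
    apply h0'.congr_of_eventuallyEq
    filter_upwards [hev] with x hx
    rw [hx, mul_one]
  have hs : Real.sinh θ ≠ 0 := Real.sinh_ne_zero.mpr hθ
  have h2 : ContDiffAt ℝ 2
      ((fun x => f (Real.sinh θ * x)) ∘ (fun y => y / Real.sinh θ)) 0 := by
    have hin : ContDiffAt ℝ 2 (fun y : ℝ => y / Real.sinh θ) 0 :=
      contDiffAt_id.div_const _
    have h1' : ContDiffAt ℝ 2 (fun x => f (Real.sinh θ * x))
        ((fun y : ℝ => y / Real.sinh θ) 0) := by simpa using h1
    exact h1'.comp 0 hin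
  refine ⟨0, ?_⟩
  apply h2.congr_of_eventuallyEq
  filter_upwards with y
  simp [Function.comp, mul_div_cancel₀, hs]
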